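/- Let k ≥ 1 and L ≥ 1 be integers with k + L ≤ n, and let H₀ ⊆ {1,…,n} be any set of k indices. Then sup{ ‖z_{Tᶜ}‖_Σ²/‖z_T‖₂² : z ∈ ℝⁿ, z ≠ 0, ‖z_{H₀}‖₁ ≥ ‖z_{H₀ᶜ}‖₁, |supp(z)| ≤ k+L } = min(1, L/k). -/

import Mathlib

open scoped BigOperators ENNReal RealInnerProductSpace
open MeasureTheory Metric

noncomputable section

/-- The set of `k`-sparse vectors of `ℝⁿ`. -/
def sparseVecs (n k : ℕ) : Set (EuclideanSpace ℝ (Fin n)) :=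
  {x | ∃ s : Finset (Fin n), s.card ≤ k ∧ ∀ i ∉ s, x i = 0}

/-- Descent set (collection of descent vectors) of `R` at `x`. -/
def descentCone {n : ℕ} (R : EuclideanSpace ℝ (Fin n) → ℝ) (x : EuclideanSpace ℝ (Fin n)) :
    Set (EuclideanSpace ℝ (Fin n)) := {z | R (x + z) ≤ R x}

/-- Descent vectors of `R` at the model set `S`. -/
def descentConeSet {n : ℕ} (R : EuclideanSpace ℝ (Fin n) → ℝ)
    (S : Set (EuclideanSpace ℝ (Fin n))) : Set (EuclideanSpace ℝ (Fin n)) :=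
  ⋃ x ∈ S, descentCone R x

/-- Weighted ℓ¹-norm `‖z‖_w = ∑ i, w i * |z i|`. -/
def wNorm {n : ℕ} (w : Fin n → ℝ) (z : EuclideanSpace ℝ (Fin n)) : ℝ := ∑ i, w i * |z i|

/-- Restriction of a vector to a set of coordinates (`z_S`). -/
def coordRestrict {n : ℕ} (z : EuclideanSpace ℝ (Fin n)) (S : Finset (Fin n)) :
    EuclideanSpace ℝ (Fin n) := WithLp.toLp 2 (fun i => if i ∈ S then z i else 0)

/-- Atomic norm `‖·‖_Σ` generated by the `k`-sparse unit vectors. -/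
def atomNormSigma (n k : ℕ) (z : EuclideanSpace ℝ (Fin n)) : ℝ :=
  gauge (convexHull ℝ {u : EuclideanSpace ℝ (Fin n) | u ∈ sparseVecs n k ∧ ‖u‖ = 1}) z

/-!
The set `P = {v : ‖v‖_∞ ≤ 1, ‖v‖₁ ≤ k}` lies in `√k` times the unit ball of `‖·‖_Σ`: if `v ∈ P`
has more than `k` nonzero coordinates, two of them are fractional, and moving mass between
them in either direction, until one becomes `0` or `±1`, writes `v` as a convex combination
of two points of `P` with fewer fractional coordinates; at the end `v` is `k`-sparse with
`‖v‖₂² ≤ ‖v‖₁ ≤ k`. Hence `‖v‖_Σ ≤ √k · max (‖v‖_∞, ‖v‖₁ / k)`.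

For `z` in the cone, with `T` the top-`k` set and `μ = min_T |z_i|`, the tail `v = z_{Tᶜ}` has
`‖v‖_∞ ≤ μ` and, by the cone condition and maximality of `T`, `‖v‖₁ ≤ ‖z_T‖₁ ≤ √k ‖z_T‖₂`;
also `k μ² ≤ ‖z_T‖₂²`. So the ratio is at most `1`. When `L ≤ k` the tail has at most `L`
nonzero entries, so it is `k`-sparse and `‖v‖_Σ² = ‖v‖₂² ≤ L μ²`, giving `L / k`. The
indicator of `H₀` together with `min k L` further coordinates attains the bound.
-/

open Pointwise Finset

section Threshold

variable {ι β : Type*} [DecidableEq ι] [AddCommMonoid β] [LinearOrder β]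

theorem Finset.sum_le_sum_of_card_eq_of_threshold [IsOrderedAddMonoid β] {s t : Finset ι}
    {f : ι → β} {μ : β} (hcard : #t = #s) (hs : ∀ i ∈ s, μ ≤ f i)
    (hts : ∀ j ∈ t, j ∉ s → f j ≤ μ) :
    ∑ i ∈ t, f i ≤ ∑ i ∈ s, f i := by
  have hsdiff : #(t \ s) = #(s \ t) := by
    have := card_sdiff_add_card_inter t s
    have := card_sdiff_add_card_inter s t
    rw [inter_comm] at this
    omega
  rw [← sum_inter_add_sum_sdiff t s, ← sum_inter_add_sum_sdiff s t, inter_comm]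
  refine add_le_add_right ?_ _
  calc ∑ i ∈ t \ s, f i ≤ #(t \ s) • μ :=
        sum_le_card_nsmul _ _ _ fun j hj => hts j (mem_sdiff.mp hj).1 (mem_sdiff.mp hj).2
    _ = #(s \ t) • μ := by rw [hsdiff]
    _ ≤ ∑ i ∈ s \ t, f i := card_nsmul_le_sum _ _ _ fun i hi => hs i (mem_sdiff.mp hi).1

theorem Finset.sum_compl_le_sum_of_threshold [Fintype ι] [IsOrderedCancelAddMonoid β]
    {s t : Finset ι} {f : ι → β} {μ : β} (hcard : #t = #s)
    (hs : ∀ i ∈ s, μ ≤ f i) (hsc : ∀ j ∉ s, f j ≤ μ) (ht : ∑ i ∈ tᶜ, f i ≤ ∑ i ∈ t, f i) :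
    ∑ i ∈ sᶜ, f i ≤ ∑ i ∈ s, f i := by
  have hts := sum_le_sum_of_card_eq_of_threshold hcard hs fun j _ hj => hsc j hj
  have hcompl : ∑ i ∈ sᶜ, f i ≤ ∑ i ∈ tᶜ, f i := by
    refine le_of_add_le_add_right (a := ∑ i ∈ s, f i) ?_
    rw [add_comm, sum_add_sum_compl, ← sum_add_sum_compl t, add_comm]
    gcongr
  exact hcompl.trans (ht.trans hts)

end Threshold

theorem Convex.mem_of_add_smul_mem {𝕜 E : Type*} [Field 𝕜] [LinearOrder 𝕜]
    [IsStrictOrderedRing 𝕜] [AddCommGroup E] [Module 𝕜 E] {C : Set E} (hC : Convex 𝕜 C)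
    {v d : E} {s t : 𝕜} (hs : s < 0) (ht : 0 < t) (h₁ : v + s • d ∈ C) (h₂ : v + t • d ∈ C) :
    v ∈ C := by
  have hts : t - s ≠ 0 := by linarith
  convert hC h₁ h₂ (a := t / (t - s)) (b := -s / (t - s)) (div_nonneg ht.le (by linarith))
    (div_nonneg (by linarith) (by linarith)) (by field_simp; ring) using 1
  match_scalars <;> field_simp <;> ring

lemma abs_add_mul_sign {x t : ℝ} (hx : x ≠ 0) (ht : 0 ≤ |x| + t) :
    |x + t * SignType.sign x| = |x| + t := by
  rcases hx.lt_or_gt with h | h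
  · rw [abs_of_neg h] at ht ⊢
    rw [sign_neg h, SignType.coe_neg_one, abs_of_nonpos (by linarith)]
    ring
  · rw [abs_of_pos h] at ht ⊢
    rw [sign_pos h, SignType.coe_one, abs_of_nonneg (by linarith)]
    ring

section SparseVectors

variable {n k : ℕ}

def sparseSphere (n k : ℕ) : Set (EuclideanSpace ℝ (Fin n)) := {u | u ∈ sparseVecs n k ∧ ‖u‖ = 1}

lemma atomNormSigma_eq_gauge (z : EuclideanSpace ℝ (Fin n)) :
    atomNormSigma n k z = gauge (convexHull ℝ (sparseSphere n k)) z := rfl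

lemma smul_mem_sparseVecs {u : EuclideanSpace ℝ (Fin n)} (hu : u ∈ sparseVecs n k) (c : ℝ) :
    c • u ∈ sparseVecs n k := by
  obtain ⟨s, hs, h0⟩ := hu
  exact ⟨s, hs, fun i hi => by simp [h0 i hi]⟩

lemma zero_mem_convexHull_sparseSphere (hn : 0 < n) (hk : 0 < k) :
    (0 : EuclideanSpace ℝ (Fin n)) ∈ convexHull ℝ (sparseSphere n k) := by
  set e := EuclideanSpace.single (⟨0, hn⟩ : Fin n) (1 : ℝ)
  have he : e ∈ sparseSphere n k := by
    refine ⟨⟨{⟨0, hn⟩}, by rw [card_singleton]; exact hk, fun i hi => ?_⟩, by simp [e]⟩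
    simp [e, mem_singleton.not.mp hi]
  have hne : -e ∈ sparseSphere n k :=
    ⟨by simpa using smul_mem_sparseVecs he.1 (-1), by simpa using he.2⟩
  simpa using (convex_convexHull ℝ _) (subset_convexHull ℝ _ he) (subset_convexHull ℝ _ hne)
    (by norm_num : (0 : ℝ) ≤ 1 / 2) (by norm_num : (0 : ℝ) ≤ 1 / 2) (by norm_num)

lemma mem_smul_convexHull_sparseSphere (hn : 0 < n) (hk : 0 < k) {u : EuclideanSpace ℝ (Fin n)}
    {r : ℝ} (hu : u ∈ sparseVecs n k) (hur : ‖u‖ ≤ r) :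
    u ∈ r • convexHull ℝ (sparseSphere n k) := by
  rcases eq_or_ne u 0 with rfl | hu0
  · exact Set.zero_mem_smul_set (zero_mem_convexHull_sparseSphere hn hk)
  have hu' : 0 < ‖u‖ := norm_pos_iff.mpr hu0
  have hr : 0 < r := hu'.trans_le hur
  have hatom : ‖u‖⁻¹ • u ∈ sparseSphere n k := ⟨smul_mem_sparseVecs hu _, norm_smul_inv_norm hu0⟩
  rw [Set.mem_smul_set_iff_inv_smul_mem₀ hr.ne']
  convert (convex_convexHull ℝ _).smul_mem_of_zero_mem (zero_mem_convexHull_sparseSphere hn hk)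
    (subset_convexHull ℝ _ hatom) (t := r⁻¹ * ‖u‖)
    ⟨by positivity, by rwa [inv_mul_le_one₀ hr]⟩ using 1
  rw [smul_smul, mul_assoc, mul_inv_cancel₀ hu'.ne', mul_one]

lemma atomNormSigma_eq_norm (hn : 0 < n) (hk : 0 < k) {u : EuclideanSpace ℝ (Fin n)}
    (hu : u ∈ sparseVecs n k) : atomNormSigma n k u = ‖u‖ := by
  refine le_antisymm (gauge_le_of_mem (norm_nonneg u)
    (mem_smul_convexHull_sparseSphere hn hk hu le_rfl)) (le_csInf ?_ ?_)
  · exact ⟨‖u‖ + 1, by positivity, mem_smul_convexHull_sparseSphere hn hk hu (by linarith)⟩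
  rintro r ⟨hr, hur⟩
  have hball : convexHull ℝ (sparseSphere n k) ⊆ Metric.closedBall 0 1 :=
    convexHull_min (fun u hu => by simp [hu.2]) (convex_closedBall 0 1)
  obtain ⟨x, hx, rfl⟩ := hur
  have := hball hx
  rw [mem_closedBall_zero_iff] at this
  rw [norm_smul, Real.norm_of_nonneg hr.le]
  exact mul_le_of_le_one_right hr.le this

def vecSupport (z : EuclideanSpace ℝ (Fin n)) : Finset (Fin n) := {i | z i ≠ 0}

def fracSupport (v : EuclideanSpace ℝ (Fin n)) : Finset (Fin n) := {i | 0 < |v i| ∧ |v i| < 1}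

def transferDir (v : EuclideanSpace ℝ (Fin n)) (i j : Fin n) : EuclideanSpace ℝ (Fin n) :=
  EuclideanSpace.single i (SignType.sign (v i) : ℝ) -
    EuclideanSpace.single j (SignType.sign (v j) : ℝ)

lemma mem_sparseVecs_of_card_vecSupport_le {u : EuclideanSpace ℝ (Fin n)}
    (h : #(vecSupport u) ≤ k) : u ∈ sparseVecs n k :=
  ⟨vecSupport u, h, fun i hi => by simpa [vecSupport] using hi⟩

lemma one_lt_card_fracSupport {v : EuclideanSpace ℝ (Fin n)} (hv : ∀ i, |v i| ≤ 1)
    (hv1 : ∑ i, |v i| ≤ k) (hk : k < #(vecSupport v)) : 1 < #(fracSupport v) := by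
  set G : Finset (Fin n) := {i | |v i| = 1}
  have hdisj : Disjoint (fracSupport v) G := by
    refine disjoint_left.mpr fun i hi hG => ?_
    exact (mem_filter.mp hi).2.2.ne (mem_filter.mp hG).2
  have hcover : vecSupport v ⊆ fracSupport v ∪ G := by
    intro i hi
    simp only [vecSupport, fracSupport, G, mem_filter, mem_union, mem_univ, true_and] at hi ⊢
    exact (hv i).lt_or_eq.imp (⟨abs_pos.mpr hi, ·⟩) id
  have hmass : (#G : ℝ) + ∑ i ∈ fracSupport v, |v i| ≤ k := by
    have hG : ∑ i ∈ G, |v i| = #G := by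
      rw [sum_congr rfl fun i hi => (mem_filter.mp hi).2, sum_const, nsmul_one]
    calc (#G : ℝ) + ∑ i ∈ fracSupport v, |v i| = ∑ i ∈ fracSupport v ∪ G, |v i| := by
          rw [sum_union hdisj, hG, add_comm]
      _ ≤ ∑ i, |v i| := sum_le_sum_of_subset_of_nonneg (subset_univ _) fun _ _ _ => abs_nonneg _
      _ ≤ k := hv1
  have hcard := (card_le_card hcover).trans (card_union_le _ _)
  by_contra! hfrac
  rcases (fracSupport v).eq_empty_or_nonempty with hempty | ⟨a, ha⟩
  · rw [hempty] at hmass hcard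
    simp only [sum_empty, add_zero, card_empty, zero_add, Nat.cast_le] at hmass hcard
    omega
  · have hpos : 0 < ∑ i ∈ fracSupport v, |v i| :=
      sum_pos' (fun _ _ => abs_nonneg _) ⟨a, ha, (mem_filter.mp ha).2.1⟩
    have : #G < k := by exact_mod_cast (lt_add_of_pos_right _ hpos).trans_le hmass
    omega

lemma abs_add_smul_transferDir_apply {v : EuclideanSpace ℝ (Fin n)} {i j : Fin n} (hij : i ≠ j)
    (hi : v i ≠ 0) (hj : v j ≠ 0) {t : ℝ} (hti : -|v i| ≤ t) (htj : t ≤ |v j|) (l : Fin n) :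
    |(v + t • transferDir v i j) l| =
      |v l| + (if l = i then t else 0) - (if l = j then t else 0) := by
  by_cases hli : l = i
  · subst hli
    simpa [transferDir, hij] using abs_add_mul_sign hi (by linarith)
  by_cases hlj : l = j
  · subst hlj
    simpa [transferDir, hli, sub_eq_add_neg] using abs_add_mul_sign hj (t := -t) (by linarith)
  · simp [transferDir, hli, hlj]

lemma transferDir_endpoint {v : EuclideanSpace ℝ (Fin n)} (hv : ∀ l, |v l| ≤ 1) {i j : Fin n}
    (hi : i ∈ fracSupport v) (hj : j ∈ fracSupport v) (hij : i ≠ j) {t : ℝ}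
    (hlo : max (-|v i|) (|v j| - 1) ≤ t) (hhi : t ≤ min (1 - |v i|) |v j|)
    (hend : t = -|v i| ∨ t = 1 - |v i| ∨ t = |v j| ∨ t = |v j| - 1) :
    (∀ l, |(v + t • transferDir v i j) l| ≤ 1) ∧
      ∑ l, |(v + t • transferDir v i j) l| = ∑ l, |v l| ∧
      #(fracSupport (v + t • transferDir v i j)) < #(fracSupport v) := by
  have hvi := (mem_filter.mp hi).2
  have hvj := (mem_filter.mp hj).2
  rw [max_le_iff] at hlo
  rw [le_min_iff] at hhi
  have hw := abs_add_smul_transferDir_apply hij (abs_pos.mp hvi.1) (abs_pos.mp hvj.1) hlo.1 hhi.2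
  set w := v + t • transferDir v i j
  have hwi : |w i| = |v i| + t := by simp [hw, hij]
  have hwj : |w j| = |v j| - t := by simp [hw, hij.symm]
  have hwl : ∀ l, l ≠ i → l ≠ j → |w l| = |v l| := fun l hli hlj => by simp [hw, hli, hlj]
  have hsub : fracSupport w ⊆ fracSupport v := by
    intro l hl
    by_cases hli : l = i
    · exact hli ▸ hi
    by_cases hlj : l = j
    · exact hlj ▸ hj
    have := (mem_filter.mp hl).2
    rw [hwl l hli hlj] at this
    exact mem_filter.mpr ⟨mem_univ _, this⟩
  refine ⟨fun l => ?_, ?_, card_lt_card ((ssubset_iff_of_subset hsub).mpr ?_)⟩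
  · by_cases hli : l = i
    · subst hli; rw [hwi]; linarith
    by_cases hlj : l = j
    · subst hlj; rw [hwj]; linarith
    rw [hwl l hli hlj]; exact hv l
  · simp only [hw, sum_sub_distrib, sum_add_distrib, sum_ite_eq', mem_univ, if_true]
    ring
  · have hwi' : i ∈ fracSupport w → 0 < |v i| + t ∧ |v i| + t < 1 :=
      fun h => hwi ▸ (mem_filter.mp h).2
    have hwj' : j ∈ fracSupport w → 0 < |v j| - t ∧ |v j| - t < 1 :=
      fun h => hwj ▸ (mem_filter.mp h).2
    rcases hend with rfl | rfl | rfl | rfl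
    · exact ⟨i, hi, fun h => by linarith [(hwi' h).1]⟩
    · exact ⟨i, hi, fun h => by linarith [(hwi' h).2]⟩
    · exact ⟨j, hj, fun h => by linarith [(hwj' h).1]⟩
    · exact ⟨j, hj, fun h => by linarith [(hwj' h).2]⟩

theorem mem_smul_convexHull_sparseSphere_of_abs_le_one (hn : 0 < n) (hk : 0 < k)
    (v : EuclideanSpace ℝ (Fin n)) (hv : ∀ i, |v i| ≤ 1) (hv1 : ∑ i, |v i| ≤ k) :
    v ∈ √k • convexHull ℝ (sparseSphere n k) := by
  induction hm : #(fracSupport v) using Nat.strong_induction_on generalizing v with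
  | _ m ih =>
  by_cases hs : #(vecSupport v) ≤ k
  · refine mem_smul_convexHull_sparseSphere hn hk (mem_sparseVecs_of_card_vecSupport_le hs) ?_
    rw [Real.le_sqrt (norm_nonneg v) k.cast_nonneg, EuclideanSpace.norm_sq_eq]
    refine le_trans (sum_le_sum fun i _ => ?_) hv1
    rw [Real.norm_eq_abs, sq]
    exact mul_le_of_le_one_left (abs_nonneg _) (hv i)
  obtain ⟨i, hi, j, hj, hij⟩ := one_lt_card.mp (one_lt_card_fracSupport hv hv1 (not_le.mp hs))
  have hvi := (mem_filter.mp hi).2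
  have hvj := (mem_filter.mp hj).2
  set s := max (-|v i|) (|v j| - 1)
  set t := min (1 - |v i|) |v j|
  have hs0 : s < 0 := max_lt (by linarith) (by linarith)
  have ht0 : 0 < t := lt_min (by linarith) hvj.1
  have hst : s ≤ t :=
    max_le (le_min (by linarith) (by linarith)) (le_min (by linarith) (by linarith))
  obtain ⟨hsv, hsv1, hslt⟩ := transferDir_endpoint hv hi hj hij le_rfl hst
    (by rcases max_choice (-|v i|) (|v j| - 1) with h | h <;> simp [h])
  obtain ⟨htv, htv1, htlt⟩ := transferDir_endpoint hv hi hj hij hst le_rfl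
    (by rcases min_choice (1 - |v i|) |v j| with h | h <;> simp [t, h])
  exact ((convex_convexHull ℝ _).smul √k).mem_of_add_smul_mem hs0 ht0
    (ih _ (hm ▸ hslt) _ hsv (hsv1 ▸ hv1) rfl) (ih _ (hm ▸ htlt) _ htv (htv1 ▸ hv1) rfl)

theorem atomNormSigma_le_of_abs_le (hn : 0 < n) (hk : 0 < k) {v : EuclideanSpace ℝ (Fin n)}
    {μ : ℝ} (hv : ∀ i, |v i| ≤ μ) (hv1 : ∑ i, |v i| ≤ k * μ) :
    atomNormSigma n k v ≤ √k * μ := by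
  rcases ((abs_nonneg _).trans (hv ⟨0, hn⟩)).eq_or_lt with rfl | hμ
  · have : v = 0 := by ext i; simpa using hv i
    simp [this, atomNormSigma_eq_gauge]
  refine gauge_le_of_mem (by positivity) ?_
  rw [mul_comm, ← smul_smul, Set.mem_smul_set_iff_inv_smul_mem₀ hμ.ne']
  refine mem_smul_convexHull_sparseSphere_of_abs_le_one hn hk _ (fun i => ?_) ?_
  · rw [PiLp.smul_apply, smul_eq_mul, abs_mul, abs_inv, abs_of_pos hμ, inv_mul_le_one₀ hμ]
    exact hv i
  · simp only [PiLp.smul_apply, smul_eq_mul, abs_mul, abs_inv, abs_of_pos hμ, ← mul_sum]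
    rwa [inv_mul_le_iff₀ hμ, mul_comm]

lemma coordRestrict_apply (z : EuclideanSpace ℝ (Fin n)) (S : Finset (Fin n)) (i : Fin n) :
    coordRestrict z S i = if i ∈ S then z i else 0 := rfl

lemma coordRestrict_coordRestrict (z : EuclideanSpace ℝ (Fin n)) (S S' : Finset (Fin n)) :
    coordRestrict (coordRestrict z S) S' = coordRestrict z (S ∩ S') := by
  ext i
  simp only [coordRestrict_apply, mem_inter]
  split_ifs <;> tauto

lemma norm_coordRestrict_sq (z : EuclideanSpace ℝ (Fin n)) (S : Finset (Fin n)) :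
    ‖coordRestrict z S‖ ^ 2 = ∑ i ∈ S, z i ^ 2 := by
  simp [EuclideanSpace.norm_sq_eq, coordRestrict_apply, apply_ite, sum_ite_mem]

lemma sum_abs_coordRestrict (z : EuclideanSpace ℝ (Fin n)) (S A : Finset (Fin n)) :
    ∑ i ∈ A, |coordRestrict z S i| = ∑ i ∈ A ∩ S, |z i| := by
  simp [coordRestrict_apply, apply_ite, sum_ite_mem]

lemma vecSupport_coordRestrict (z : EuclideanSpace ℝ (Fin n)) (S : Finset (Fin n)) :
    vecSupport (coordRestrict z S) = vecSupport z ∩ S := by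
  ext i
  simp [vecSupport, coordRestrict_apply, and_comm]

lemma norm_sq_le_card_vecSupport_mul {x : EuclideanSpace ℝ (Fin n)} {μ : ℝ}
    (hx : ∀ i, |x i| ≤ μ) : ‖x‖ ^ 2 ≤ #(vecSupport x) * μ ^ 2 := by
  rw [EuclideanSpace.norm_sq_eq, ← sum_filter_of_ne (p := fun i => x i ≠ 0) (by simp)]
  calc ∑ i ∈ vecSupport x, ‖x i‖ ^ 2 ≤ ∑ i ∈ vecSupport x, μ ^ 2 :=
        sum_le_sum fun i _ => pow_le_pow_left₀ (norm_nonneg _) (hx i) 2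
    _ = #(vecSupport x) * μ ^ 2 := by rw [sum_const, nsmul_eq_mul]

section Tail

variable {z : EuclideanSpace ℝ (Fin n)} {S : Finset (Fin n)} {μ : ℝ}

lemma card_mul_sq_le_norm_coordRestrict_sq (hμ0 : 0 ≤ μ) (hμS : ∀ i ∈ S, μ ≤ |z i|) :
    #S * μ ^ 2 ≤ ‖coordRestrict z S‖ ^ 2 := by
  rw [norm_coordRestrict_sq, ← nsmul_eq_mul, ← sum_const]
  exact sum_le_sum fun i hi => by rw [← sq_abs (z i)]; exact pow_le_pow_left₀ hμ0 (hμS i hi) 2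

lemma abs_coordRestrict_compl_le (hμ0 : 0 ≤ μ) (hμS : ∀ j ∉ S, |z j| ≤ μ) (i : Fin n) :
    |coordRestrict z Sᶜ i| ≤ μ := by
  rw [coordRestrict_apply]
  split_ifs with h
  · exact hμS i (mem_compl.mp h)
  · rwa [abs_zero]

theorem atomNormSigma_coordRestrict_compl_le (hn : 0 < n) (hk : 0 < k) (hS : #S = k)
    (hμ0 : 0 ≤ μ) (hμS : ∀ i ∈ S, μ ≤ |z i|) (hμSc : ∀ j ∉ S, |z j| ≤ μ)
    (hl1 : ∑ i ∈ Sᶜ, |z i| ≤ ∑ i ∈ S, |z i|) :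
    atomNormSigma n k (coordRestrict z Sᶜ) ≤ ‖coordRestrict z S‖ := by
  set W := ∑ i ∈ S, |z i|
  have hkpos : (0 : ℝ) < k := by exact_mod_cast hk
  have hμw := card_mul_sq_le_norm_coordRestrict_sq hμ0 hμS
  rw [hS] at hμw
  have hWw : W ^ 2 ≤ k * ‖coordRestrict z S‖ ^ 2 := by
    rw [norm_coordRestrict_sq, ← hS]
    simpa [sq_abs] using sq_sum_le_card_mul_sum_sq (s := S) (f := fun i => |z i|)
  calc atomNormSigma n k (coordRestrict z Sᶜ) ≤ √k * max μ (W / k) := by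
        refine atomNormSigma_le_of_abs_le hn hk
          (fun i => (abs_coordRestrict_compl_le hμ0 hμSc i).trans (le_max_left _ _)) ?_
        rw [sum_abs_coordRestrict, univ_inter]
        calc _ ≤ W := hl1
          _ = k * (W / k) := by field_simp
          _ ≤ k * max μ (W / k) := by gcongr; exact le_max_right _ _
    _ ≤ ‖coordRestrict z S‖ := by
        rw [mul_max_of_nonneg _ _ (Real.sqrt_nonneg _)]
        refine max_le (le_of_sq_le_sq ?_ (norm_nonneg _)) (le_of_sq_le_sq ?_ (norm_nonneg _))
        · rwa [mul_pow, Real.sq_sqrt hkpos.le]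
        · rw [mul_pow, Real.sq_sqrt hkpos.le, div_pow, sq (k : ℝ), ← mul_div_assoc,
            mul_div_mul_left _ _ hkpos.ne', div_le_iff₀ hkpos, mul_comm]
          exact hWw

lemma subset_vecSupport_or_vecSupport_subset (hmax : ∀ i ∈ S, ∀ j ∉ S, |z j| ≤ |z i|) :
    S ⊆ vecSupport z ∨ vecSupport z ⊆ S := by
  by_contra! h
  obtain ⟨i, hiS, hi⟩ := not_subset.mp h.1
  obtain ⟨j, hj, hjS⟩ := not_subset.mp h.2
  simp only [vecSupport, mem_filter, mem_univ, true_and, not_not] at hi hj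
  have := hmax i hiS j hjS
  rw [hi, abs_zero] at this
  exact hj (abs_nonpos_iff.mp this)

lemma card_vecSupport_coordRestrict_compl_le {L : ℕ} (hS : #S = k)
    (hmax : ∀ i ∈ S, ∀ j ∉ S, |z j| ≤ |z i|) (hsupp : #(vecSupport z) ≤ k + L) :
    #(vecSupport (coordRestrict z Sᶜ)) ≤ L := by
  rw [vecSupport_coordRestrict, ← sdiff_eq_inter_compl]
  rcases subset_vecSupport_or_vecSupport_subset hmax with h | h
  · rw [card_sdiff_of_subset h]
    omega
  · simp [sdiff_eq_empty_iff_subset.mpr h]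

theorem mul_atomNormSigma_coordRestrict_compl_sq_le (hn : 0 < n) (hk : 0 < k) {L : ℕ}
    (hS : #S = k) (hμ0 : 0 ≤ μ) (hμS : ∀ i ∈ S, μ ≤ |z i|) (hμSc : ∀ j ∉ S, |z j| ≤ μ)
    (hsupp : #(vecSupport (coordRestrict z Sᶜ)) ≤ L) (hLk : L ≤ k) :
    k * atomNormSigma n k (coordRestrict z Sᶜ) ^ 2 ≤ L * ‖coordRestrict z S‖ ^ 2 := by
  rw [atomNormSigma_eq_norm hn hk (mem_sparseVecs_of_card_vecSupport_le (hsupp.trans hLk))]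
  have hv := norm_sq_le_card_vecSupport_mul (abs_coordRestrict_compl_le hμ0 hμSc)
  have hw := card_mul_sq_le_norm_coordRestrict_sq hμ0 hμS
  rw [hS] at hw
  calc (k : ℝ) * ‖coordRestrict z Sᶜ‖ ^ 2 ≤ k * (L * μ ^ 2) := by
        gcongr
        exact hv.trans (by gcongr)
    _ = L * (k * μ ^ 2) := by ring
    _ ≤ L * ‖coordRestrict z S‖ ^ 2 := by gcongr

end Tail

theorem exists_ratio_eq_min {L : ℕ} (hk : 0 < k) (hn : k + L ≤ n) {H₀ : Finset (Fin n)}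
    (hH₀ : #H₀ = k) :
    ∃ z : EuclideanSpace ℝ (Fin n), z ≠ 0 ∧ ∑ i ∈ H₀ᶜ, |z i| ≤ ∑ i ∈ H₀, |z i| ∧
      #(vecSupport z) ≤ k + L ∧ ∀ S : Finset (Fin n), #S = k →
        (∀ i ∈ S, ∀ j ∉ S, |z j| ≤ |z i|) →
        atomNormSigma n k (coordRestrict z Sᶜ) ^ 2 / ‖coordRestrict z S‖ ^ 2 =
          min 1 ((L : ℝ) / k) := by
  set M := min k L
  obtain ⟨E, hEH, hE⟩ := exists_subset_card_eq (s := H₀ᶜ) (n := M)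
    (by rw [card_compl, Fintype.card_fin, hH₀]; omega)
  have hdisj : Disjoint H₀ E := disjoint_of_subset_right hEH disjoint_compl_right
  set U := H₀ ∪ E
  have hU : #U = k + M := by rw [card_union_of_disjoint hdisj, hH₀, hE]
  set c : EuclideanSpace ℝ (Fin n) := WithLp.toLp 2 fun _ => 1
  have hsuppU : vecSupport (coordRestrict c U) = U := by
    rw [vecSupport_coordRestrict]
    ext i
    simp [vecSupport, c]
  refine ⟨coordRestrict c U, fun h => ?_, ?_, by rw [hsuppU, hU]; omega, fun S hS hmax => ?_⟩
  · rw [h] at hsuppU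
    have : #U = 0 := by rw [← hsuppU]; simp [vecSupport]
    omega
  · have hH₀U : H₀ ∩ U = H₀ := inter_eq_left.mpr subset_union_left
    have hEU : H₀ᶜ ∩ U = E := by
      rw [inter_union_distrib_left, inter_comm, inter_compl, empty_union, inter_eq_right.mpr hEH]
    simp [sum_abs_coordRestrict, c, hH₀U, hEU, hE, hH₀, M]
  have hSU : S ⊆ U := by
    rcases subset_vecSupport_or_vecSupport_subset hmax with h | h
    · exact hsuppU ▸ h
    · exact (eq_of_subset_of_card_le (hsuppU ▸ h) (by omega)).ge
  have hUS : #(U ∩ Sᶜ) = M := by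
    rw [← sdiff_eq_inter_compl, card_sdiff_of_subset hSU]
    omega
  have hsparse : coordRestrict c (U ∩ Sᶜ) ∈ sparseVecs n k :=
    mem_sparseVecs_of_card_vecSupport_le <| by
      rw [vecSupport_coordRestrict]
      exact (card_le_card inter_subset_right).trans (hUS.trans_le (min_le_left _ _))
  rw [coordRestrict_coordRestrict, coordRestrict_coordRestrict, inter_eq_right.mpr hSU,
    atomNormSigma_eq_norm (by omega) hk hsparse, norm_coordRestrict_sq, norm_coordRestrict_sq]
  simp only [c, one_pow, sum_const, nsmul_eq_mul, mul_one, hUS, hS, M, Nat.cast_min]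
  rw [← min_div_div_right (Nat.cast_nonneg k), div_self (by positivity)]

end SparseVectors

theorem DL_l1_eq_min_general
    (n k L : ℕ) (hk : 1 ≤ k) (hn : k + L ≤ n)
    (T : EuclideanSpace ℝ (Fin n) → Finset (Fin n))
    (hT : ∀ z, (T z).card = k ∧ ∀ i ∈ T z, ∀ j ∉ T z, |z j| ≤ |z i|)
    (H₀ : Finset (Fin n)) (hH₀card : H₀.card = k) :
    sSup {r : ℝ | ∃ z : EuclideanSpace ℝ (Fin n), z ≠ 0 ∧
        (∑ i ∈ H₀ᶜ, |z i|) ≤ (∑ i ∈ H₀, |z i|) ∧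
        (Finset.univ.filter fun i => z i ≠ 0).card ≤ k + L ∧
        r = (atomNormSigma n k (coordRestrict z (T z)ᶜ)) ^ 2 / ‖coordRestrict z (T z)‖ ^ 2}
      = min 1 ((L : ℝ) / k) := by
  have hn0 : 0 < n := by omega
  obtain ⟨z₀, hz₀, hcone₀, hsupp₀, hratio₀⟩ := exists_ratio_eq_min hk hn hH₀card
  refine IsGreatest.csSup_eq ⟨⟨z₀, hz₀, hcone₀, hsupp₀, (hratio₀ _ (hT z₀).1 (hT z₀).2).symm⟩, ?_⟩
  rintro _ ⟨z, -, hcone, hsupp, rfl⟩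
  obtain ⟨hS, hmax⟩ := hT z
  obtain ⟨i₀, hi₀, hμS⟩ := (T z).exists_min_image (fun i => |z i|) (card_pos.mp (by omega))
  have hμSc : ∀ j ∉ T z, |z j| ≤ |z i₀| := hmax i₀ hi₀
  have hl1 := sum_compl_le_sum_of_threshold (hH₀card.trans hS.symm) hμS hμSc hcone
  have hle := atomNormSigma_coordRestrict_compl_le hn0 hk hS (abs_nonneg _) hμS hμSc hl1
  have hle_one : atomNormSigma n k (coordRestrict z (T z)ᶜ) ^ 2 / ‖coordRestrict z (T z)‖ ^ 2 ≤ 1 :=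
    div_le_one_of_le₀ (pow_le_pow_left₀ (gauge_nonneg _) hle 2) (sq_nonneg _)
  refine le_min hle_one ?_
  rcases le_or_gt L k with hLk | hkL
  · have := mul_atomNormSigma_coordRestrict_compl_sq_le hn0 hk hS (abs_nonneg _) hμS hμSc
      (card_vecSupport_coordRestrict_compl_le hS hmax hsupp) hLk
    rcases (sq_nonneg ‖coordRestrict z (T z)‖).eq_or_lt with h | h
    · rw [← h, div_zero]
      positivity
    · rw [div_le_div_iff₀ h (by positivity)]
      linarith
  · exact hle_one.trans ((one_le_div (by positivity)).mpr (by exact_mod_cast hkL.le))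

/-- Lemma 11 of the paper, exact value `min(1, L/k)` of the constrained supremum
`D_L(‖·‖₁)` for the ℓ¹-norm. `T` picks, for each `z`, `k` indices carrying the `k` largest
absolute values of coordinates of `z`. -/
theorem DL_l1_eq_min
    (n k L : ℕ) (hk : 1 ≤ k) (hL : 1 ≤ L) (hn : k + L ≤ n)
    (T : EuclideanSpace ℝ (Fin n) → Finset (Fin n))
    (hT : ∀ z, (T z).card = k ∧ ∀ i ∈ T z, ∀ j ∉ T z, |z j| ≤ |z i|)
    (H₀ : Finset (Fin n)) (hH₀card : H₀.card = k) :
    sSup {r : ℝ | ∃ z : EuclideanSpace ℝ (Fin n), z ≠ 0 ∧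
        (∑ i ∈ H₀ᶜ, |z i|) ≤ (∑ i ∈ H₀, |z i|) ∧
        (Finset.univ.filter fun i => z i ≠ 0).card ≤ k + L ∧
        r = (atomNormSigma n k (coordRestrict z (T z)ᶜ)) ^ 2 / ‖coordRestrict z (T z)‖ ^ 2}
      = min 1 ((L : ℝ) / k) :=
  DL_l1_eq_min_general n k L hk hn T hT H₀ hH₀card

end
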